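/- Let s be a complex number with Re(s) > 0 and let k > 2 be real. Then Z(s, x+y+k) = k^s · ₃F₂(−s/2, −s/2, 1/2; 1, 1; 4/k²). -/

import Mathlib

open MeasureTheory Real

/-- The Pochhammer symbol `(a)_n = a (a+1) ⋯ (a+n-1)` for a complex number `a`. -/
noncomputable def cpoch (a : ℂ) (n : ℕ) : ℂ := ∏ i ∈ Finset.range n, (a + i)

/-- The generalized hypergeometric series `₃F₂(a₁,a₂,a₃; b₁,b₂; z)`. -/
noncomputable def F32 (a₁ a₂ a₃ b₁ b₂ z : ℂ) : ℂ :=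
  ∑' n : ℕ, (cpoch a₁ n * cpoch a₂ n * cpoch a₃ n) / (cpoch b₁ n * cpoch b₂ n)
    * z ^ n / (n.factorial : ℂ)

/-- The Zeta Mahler function of `x + y + k`. -/
noncomputable def Zcl (s : ℂ) (k : ℝ) : ℂ :=
  (1 / (2 * (π : ℂ)) ^ 2) *
    ∫ θ₁ in (0 : ℝ)..(2 * π), ∫ θ₂ in (0 : ℝ)..(2 * π),
      ((‖Complex.exp (θ₁ * Complex.I) +
        Complex.exp (θ₂ * Complex.I) + (k : ℂ)‖ : ℂ)) ^ s

/-!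
Write `u = e^{iθ₁} + e^{iθ₂}`, so `‖u‖ ≤ 2 < k`. Then
`|u + k|^s = k^s (1 + u/k)^{s/2} (1 + ū/k)^{s/2}`, and the two binomial series give
`|u + k|^s = k^s ∑_{m,n} C(s/2, m) C(s/2, n) (u/k)^m (ū/k)^n`, dominated uniformly on the torus
by the square of `∑ |C(s/2, n)| (2/k)^n < ∞`. Integrating termwise, orthogonality of the
characters `e^{ijθ}` kills the off-diagonal terms and gives
`∫∫ |u|^{2m} = (2π)² ∑_i C(m,i)² = (2π)² C(2m,m)`. Finally
`C(s/2,m)² C(2m,m) k^{-2m}` is exactly the `m`-th term of `₃F₂(-s/2, -s/2, 1/2; 1, 1; 4/k²)`,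
because `(1/2)_m 4^m = m! C(2m,m)`.
-/

open scoped Nat Complex ComplexConjugate
open Complex (I slitPlane)

theorem hasSum_prod_ite_eq_iff {α M : Type*} [DecidableEq α] [AddCommMonoid M]
    [TopologicalSpace M] {g : α → M} {a : M} :
    HasSum (fun p : α × α ↦ if p.1 = p.2 then g p.1 else 0) a ↔ HasSum g a := by
  rw [← (Function.Injective.hasSum_iff (g := fun x : α ↦ (x, x))
    (fun _ _ h ↦ (Prod.ext_iff.mp h).1) fun p hp ↦ if_neg fun h ↦ hp ⟨p.1, Prod.ext rfl h⟩)]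
  simp [Function.comp_def]

theorem hasSum_integral_integral_of_norm_le {ι E : Type*} [Countable ι] [NormedAddCommGroup E]
    [NormedSpace ℝ E] {F : ι → ℝ → ℝ → E} {f : ℝ → ℝ → E} {B : ι → ℝ} {a b c d : ℝ}
    (hF : ∀ i, Continuous (Function.uncurry (F i))) (hFB : ∀ i x y, ‖F i x y‖ ≤ B i)
    (hB : Summable B) (hf : ∀ x y, HasSum (fun i ↦ F i x y) (f x y)) :
    HasSum (fun i ↦ ∫ x in a..b, ∫ y in c..d, F i x y) (∫ x in a..b, ∫ y in c..d, f x y) := by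
  have hinner (x : ℝ) : HasSum (fun i ↦ ∫ y in c..d, F i x y) (∫ y in c..d, f x y) :=
    intervalIntegral.hasSum_integral_of_dominated_convergence (fun i _ ↦ B i)
      (fun i ↦ ((hF i).comp (Continuous.prodMk_right x)).aestronglyMeasurable)
      (fun i ↦ ae_of_all _ fun y _ ↦ hFB i x y) (ae_of_all _ fun _ _ ↦ hB)
      intervalIntegrable_const (ae_of_all _ fun y _ ↦ hf x y)
  exact intervalIntegral.hasSum_integral_of_dominated_convergence (fun i _ ↦ B i * |d - c|)
    (fun i ↦ (intervalIntegral.continuous_parametric_intervalIntegral_of_continuous'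
      (hF i) c d).aestronglyMeasurable)
    (fun i ↦ ae_of_all _ fun x _ ↦
      intervalIntegral.norm_integral_le_of_norm_le_const fun y _ ↦ hFB i x y)
    (ae_of_all _ fun _ _ ↦ hB.mul_right _) intervalIntegrable_const
    (ae_of_all _ fun x _ ↦ hinner x)

namespace Complex

theorem hasSum_choose_mul_pow (a : ℂ) {z : ℂ} (hz : ‖z‖ < 1) :
    HasSum (fun n ↦ Ring.choose a n * z ^ n) ((1 + z) ^ a) := by
  have h := (one_add_cpow_hasFPowerSeriesOnBall_zero (a := a)).hasSum (y := z)
    (by simpa [← ofReal_norm, ENNReal.ofReal_lt_one] using hz)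
  simpa [binomialSeries, mul_comm] using h

theorem summable_norm_choose_mul_pow (a : ℂ) {r : ℝ} (hr0 : 0 ≤ r) (hr : r < 1) :
    Summable (fun n ↦ ‖Ring.choose a n‖ * r ^ n) := by
  lift r to NNReal using hr0
  have := (binomialSeries ℂ a).summable_norm_mul_pow (r := r)
    ((ENNReal.coe_lt_one_iff.mpr (by exact_mod_cast hr)).trans_le binomialSeries_radius_ge_one)
  simpa [binomialSeries, FormalMultilinearSeries.ofScalars_norm] using this

theorem choose_mul_factorial (a : ℂ) (n : ℕ) :
    Ring.choose a n * n ! = ∏ i ∈ Finset.range n, (a - i) := by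
  rw [← descPochhammer_eval_eq_prod_range, Ring.choose_eq_smul, ← Polynomial.aeval_eq_smeval,
    Polynomial.aeval_def, ← Polynomial.eval_map, descPochhammer_map, smul_eq_mul,
    mul_comm, mul_inv_cancel_left₀ (by exact_mod_cast n.factorial_ne_zero)]

theorem ofReal_norm_cpow_eq_cpow_mul_conj_cpow {w : ℂ} (hw : w ∈ slitPlane) (s : ℂ) :
    (‖w‖ : ℂ) ^ s = w ^ (s / 2) * conj w ^ (s / 2) := by
  obtain ⟨harg, hw0⟩ := mem_slitPlane_iff_arg.mp hw
  have hnorm : (‖w‖ : ℂ) ≠ 0 := by exact_mod_cast norm_ne_zero_iff.mpr hw0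
  rw [cpow_def_of_ne_zero hw0, cpow_def_of_ne_zero ((map_ne_zero _).mpr hw0),
    cpow_def_of_ne_zero hnorm, ← exp_add, ← add_mul, log_conj _ harg, add_conj, log_re,
    ← ofReal_log (norm_nonneg w)]
  congr 1
  push_cast
  ring

theorem norm_exp_mul_I_add_exp_mul_I_le_two (θ₁ θ₂ : ℝ) : ‖cexp (θ₁ * I) + cexp (θ₂ * I)‖ ≤ 2 :=
  (norm_add_le _ _).trans (by simp [norm_exp_ofReal_mul_I]; norm_num)

end Complex

theorem hasSum_ofReal_norm_add_cpow {k : ℝ} (hk : 0 < k) {u : ℂ} (hu : ‖u‖ < k) (s : ℂ) :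
    HasSum (fun p : ℕ × ℕ ↦ (k : ℂ) ^ s *
        (Ring.choose (s / 2) p.1 * (u / k) ^ p.1 * (Ring.choose (s / 2) p.2 * (conj u / k) ^ p.2)))
      ((‖u + k‖ : ℂ) ^ s) := by
  have hz : ‖u / k‖ < 1 := by
    rwa [norm_div, Complex.norm_real, Real.norm_of_nonneg hk.le, div_lt_one hk]
  have hz' : ‖conj u / k‖ < 1 := by rwa [norm_div, Complex.norm_conj, ← norm_div]
  have hsplit : (‖u + k‖ : ℂ) ^ s =
      (k : ℂ) ^ s * ((1 + u / k) ^ (s / 2) * (1 + conj u / k) ^ (s / 2)) := by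
    have hk' : (k : ℂ) ≠ 0 := by exact_mod_cast hk.ne'
    have : u + k = k * (1 + u / k) := by field_simp; ring
    rw [this, norm_mul, Complex.norm_real, Real.norm_of_nonneg hk.le, Complex.ofReal_mul,
      Complex.mul_cpow_ofReal_nonneg hk.le (norm_nonneg _),
      Complex.ofReal_norm_cpow_eq_cpow_mul_conj_cpow (Complex.mem_slitPlane_of_norm_lt_one hz)]
    simp only [map_add, map_one, map_div₀, Complex.conj_ofReal]
  have hsum : Summable fun p : ℕ × ℕ ↦
      Ring.choose (s / 2) p.1 * (u / k) ^ p.1 * (Ring.choose (s / 2) p.2 * (conj u / k) ^ p.2) := by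
    refine summable_mul_of_summable_norm (f := fun n ↦ Ring.choose (s / 2) n * (u / k) ^ n)
      (g := fun n ↦ Ring.choose (s / 2) n * (conj u / k) ^ n) ?_ ?_
    · simpa only [norm_mul, norm_pow] using
        Complex.summable_norm_choose_mul_pow (s / 2) (norm_nonneg _) hz
    · simpa only [norm_mul, norm_pow] using
        Complex.summable_norm_choose_mul_pow (s / 2) (norm_nonneg _) hz'
  rw [hsplit]
  exact ((Complex.hasSum_choose_mul_pow _ hz).mul
    (Complex.hasSum_choose_mul_pow _ hz') hsum).mul_left _

theorem integral_exp_mul_I_pow_mul_conj_pow (i l : ℕ) :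
    ∫ θ in (0 : ℝ)..2 * π, cexp (θ * I) ^ i * conj (cexp (θ * I)) ^ l =
      if i = l then 2 * (π : ℂ) else 0 := by
  have hexp (θ : ℝ) : cexp (θ * I) ^ i * conj (cexp (θ * I)) ^ l = cexp ((i - l) * I * θ) := by
    rw [← Complex.exp_conj, ← Complex.exp_nat_mul, ← Complex.exp_nat_mul, ← Complex.exp_add]
    simp only [map_mul, Complex.conj_ofReal, Complex.conj_I]
    ring_nf
  simp_rw [hexp]
  split_ifs with hil
  · simp [hil]
  · have hc : ((i : ℂ) - l) * I ≠ 0 :=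
      mul_ne_zero (sub_ne_zero.mpr (Nat.cast_injective.ne hil)) Complex.I_ne_zero
    have hperiod : cexp ((i - l) * I * (2 * π : ℝ)) = 1 := by
      rw [← Complex.exp_int_mul_two_pi_mul_I ((i : ℤ) - l)]
      push_cast
      ring_nf
    rw [integral_exp_mul_complex hc, hperiod]
    simp

theorem integral_add_exp_mul_I_pow_mul_conj_pow (a : ℂ) (m n : ℕ) :
    ∫ θ in (0 : ℝ)..2 * π, (a + cexp (θ * I)) ^ m * conj (a + cexp (θ * I)) ^ n =
      2 * π * ∑ i ∈ Finset.range (m + 1),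
        (m.choose i * n.choose i : ℂ) * (a ^ (m - i) * conj a ^ (n - i)) := by
  have hexpand (θ : ℝ) : (a + cexp (θ * I)) ^ m * conj (a + cexp (θ * I)) ^ n =
      ∑ i ∈ Finset.range (m + 1), ∑ l ∈ Finset.range (n + 1),
        (m.choose i * n.choose l : ℂ) * (a ^ (m - i) * conj a ^ (n - l)) *
          (cexp (θ * I) ^ i * conj (cexp (θ * I)) ^ l) := by
    rw [add_comm, map_add, add_pow, add_pow, Finset.sum_mul_sum]
    refine Finset.sum_congr rfl fun i _ ↦ Finset.sum_congr rfl fun l _ ↦ ?_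
    ring
  simp_rw [hexpand]
  rw [intervalIntegral.integral_finsetSum fun i _ ↦
    (by fun_prop : Continuous _).intervalIntegrable _ _, Finset.mul_sum]
  refine Finset.sum_congr rfl fun i _ ↦ ?_
  rw [intervalIntegral.integral_finsetSum fun l _ ↦
    (by fun_prop : Continuous _).intervalIntegrable _ _]
  simp_rw [intervalIntegral.integral_const_mul, integral_exp_mul_I_pow_mul_conj_pow, mul_ite,
    mul_zero, Finset.sum_ite_eq, Finset.mem_range]
  split_ifs with hi
  · ring
  · simp [Nat.choose_eq_zero_of_lt (not_lt.mp hi)]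

theorem integral_integral_exp_add_exp_pow_mul_conj_pow (m n : ℕ) :
    ∫ θ₁ in (0 : ℝ)..2 * π, ∫ θ₂ in (0 : ℝ)..2 * π,
      (cexp (θ₁ * I) + cexp (θ₂ * I)) ^ m * conj (cexp (θ₁ * I) + cexp (θ₂ * I)) ^ n =
      if m = n then (2 * π) ^ 2 * (m.centralBinom : ℂ) else 0 := by
  simp_rw [integral_add_exp_mul_I_pow_mul_conj_pow, intervalIntegral.integral_const_mul]
  rw [intervalIntegral.integral_finsetSum fun i _ ↦
    (by fun_prop : Continuous _).intervalIntegrable _ _]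
  simp_rw [intervalIntegral.integral_const_mul, integral_exp_mul_I_pow_mul_conj_pow]
  split_ifs with hmn
  · subst hmn
    simp only [if_true]
    rw [Nat.centralBinom_eq_two_mul_choose, ← Nat.sum_range_choose_sq, Nat.cast_sum,
      Finset.mul_sum, Finset.mul_sum]
    exact Finset.sum_congr rfl fun _ _ ↦ by push_cast; ring
  · refine mul_eq_zero_of_right _ (Finset.sum_eq_zero fun i hi ↦ ?_)
    rw [Finset.mem_range] at hi
    rcases le_or_gt i n with hin | hin
    · rw [if_neg (by omega), mul_zero]
    · simp [Nat.choose_eq_zero_of_lt hin]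

theorem integral_integral_exp_add_exp_div_pow_mul_conj_div_pow (k : ℝ) (m n : ℕ) :
    ∫ θ₁ in (0 : ℝ)..2 * π, ∫ θ₂ in (0 : ℝ)..2 * π,
      ((cexp (θ₁ * I) + cexp (θ₂ * I)) / k) ^ m *
        (conj (cexp (θ₁ * I) + cexp (θ₂ * I)) / k) ^ n =
      if m = n then (2 * π) ^ 2 * (m.centralBinom * (1 / (k : ℂ) ^ 2) ^ m) else 0 := by
  simp_rw [div_pow, div_mul_div_comm, div_eq_inv_mul _ ((k : ℂ) ^ m * _),
    intervalIntegral.integral_const_mul, integral_integral_exp_add_exp_pow_mul_conj_pow]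
  split_ifs with hmn
  · subst hmn
    ring
  · rw [mul_zero]

theorem hasSum_integral_integral_ofReal_norm_exp_add_exp_add_cpow (s : ℂ) {k : ℝ} (hk : 2 < k) :
    HasSum (fun n : ℕ ↦ (2 * π) ^ 2 * (k : ℂ) ^ s *
        (Ring.choose (s / 2) n ^ 2 * n.centralBinom * (1 / (k : ℂ) ^ 2) ^ n))
      (∫ θ₁ in (0 : ℝ)..2 * π, ∫ θ₂ in (0 : ℝ)..2 * π,
        (‖cexp (θ₁ * I) + cexp (θ₂ * I) + k‖ : ℂ) ^ s) := by
  have hk0 : 0 < k := by linarith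
  have hu := Complex.norm_exp_mul_I_add_exp_mul_I_le_two
  have hbound (p : ℕ × ℕ) (θ₁ θ₂ : ℝ) : ‖(k : ℂ) ^ s *
      (Ring.choose (s / 2) p.1 * ((cexp (θ₁ * I) + cexp (θ₂ * I)) / k) ^ p.1 *
        (Ring.choose (s / 2) p.2 * (conj (cexp (θ₁ * I) + cexp (θ₂ * I)) / k) ^ p.2))‖ ≤
      ‖(k : ℂ) ^ s‖ * (‖Ring.choose (s / 2) p.1‖ * (2 / k) ^ p.1 *
        (‖Ring.choose (s / 2) p.2‖ * (2 / k) ^ p.2)) := by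
    simp only [norm_mul, norm_pow, norm_div, Complex.norm_real, Complex.norm_conj,
      Real.norm_of_nonneg hk0.le]
    gcongr <;> exact hu θ₁ θ₂
  have hsummable : Summable fun p : ℕ × ℕ ↦ ‖(k : ℂ) ^ s‖ * (‖Ring.choose (s / 2) p.1‖ *
      (2 / k) ^ p.1 * (‖Ring.choose (s / 2) p.2‖ * (2 / k) ^ p.2)) := by
    have hsum := Complex.summable_norm_choose_mul_pow (s / 2) (by positivity)
      ((div_lt_one hk0).mpr hk)
    exact (hsum.mul_of_nonneg hsum (fun _ ↦ by positivity) (fun _ ↦ by positivity)).mul_left _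
  have H := hasSum_integral_integral_of_norm_le (a := 0) (b := 2 * π) (c := 0) (d := 2 * π)
    (fun p ↦ by fun_prop) hbound hsummable
    (fun θ₁ θ₂ ↦ hasSum_ofReal_norm_add_cpow hk0 ((hu θ₁ θ₂).trans_lt hk) s)
  have hterm (p : ℕ × ℕ) : (∫ θ₁ in (0 : ℝ)..2 * π, ∫ θ₂ in (0 : ℝ)..2 * π, (k : ℂ) ^ s *
      (Ring.choose (s / 2) p.1 * ((cexp (θ₁ * I) + cexp (θ₂ * I)) / k) ^ p.1 *
        (Ring.choose (s / 2) p.2 * (conj (cexp (θ₁ * I) + cexp (θ₂ * I)) / k) ^ p.2))) =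
      if p.1 = p.2 then (2 * π) ^ 2 * (k : ℂ) ^ s *
        (Ring.choose (s / 2) p.1 ^ 2 * p.1.centralBinom * (1 / (k : ℂ) ^ 2) ^ p.1) else 0 := by
    have hfactor (x y : ℂ) :
        (k : ℂ) ^ s * (Ring.choose (s / 2) p.1 * x * (Ring.choose (s / 2) p.2 * y)) =
          (k : ℂ) ^ s * Ring.choose (s / 2) p.1 * Ring.choose (s / 2) p.2 * (x * y) := by
      ring
    simp_rw [hfactor, intervalIntegral.integral_const_mul,
      integral_integral_exp_add_exp_div_pow_mul_conj_div_pow]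
    split_ifs with hp
    · rw [hp]
      ring
    · rw [mul_zero]
  simp_rw [hterm] at H
  exact hasSum_prod_ite_eq_iff.mp H

theorem cpoch_neg (a : ℂ) (n : ℕ) : cpoch (-a) n = (-1) ^ n * (Ring.choose a n * n !) := by
  have hneg := Finset.prod_neg (s := Finset.range n) fun i : ℕ ↦ a - i
  rw [Finset.card_range] at hneg
  rw [Complex.choose_mul_factorial, cpoch, ← hneg]
  exact Finset.prod_congr rfl fun _ _ ↦ by ring

theorem cpoch_one (n : ℕ) : cpoch 1 n = n ! := by
  induction n with
  | zero => simp [cpoch]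
  | succ n ih =>
    rw [cpoch, Finset.prod_range_succ, ← cpoch, ih, Nat.factorial_succ]
    push_cast
    ring

theorem cpoch_half_mul_four_pow (n : ℕ) : cpoch (1 / 2) n * 4 ^ n = n ! * n.centralBinom := by
  induction n with
  | zero => simp [cpoch]
  | succ n ih =>
    have h := congrArg (Nat.cast : ℕ → ℂ) (Nat.succ_mul_centralBinom_succ n)
    rw [cpoch, Finset.prod_range_succ, ← cpoch, Nat.factorial_succ]
    push_cast at h ⊢
    linear_combination (2 + 4 * (n : ℂ)) * ih - (n ! : ℂ) * h

theorem F32_neg_neg_half_one_one (a z : ℂ) :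
    F32 (-a) (-a) (1 / 2) 1 1 z = ∑' n, Ring.choose a n ^ 2 * n.centralBinom * (z / 4) ^ n := by
  refine tsum_congr fun n ↦ ?_
  have hhalf : cpoch (1 / 2) n = n ! * n.centralBinom / 4 ^ n := by
    rw [← cpoch_half_mul_four_pow, mul_div_cancel_right₀ _ (by norm_num)]
  have hfact : (n ! : ℂ) ≠ 0 := by exact_mod_cast n.factorial_ne_zero
  rw [cpoch_neg, hhalf, cpoch_one]
  field_simp
  rw [← pow_mul, pow_mul', neg_one_sq, one_pow, div_pow]
  field_simp

theorem Z_xyk_eq_of_two_lt_general (s : ℂ) (k : ℝ) (hk : 2 < k) :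
    Zcl s k = (k : ℂ) ^ s * F32 (-(s / 2)) (-(s / 2)) (1/2) 1 1 (4 / (k : ℂ) ^ 2) := by
  rw [Zcl, ← (hasSum_integral_integral_ofReal_norm_exp_add_exp_add_cpow s hk).tsum_eq,
    tsum_mul_left, F32_neg_neg_half_one_one, div_div, mul_comm _ (4 : ℂ), ← div_div,
    div_self (by norm_num : (4 : ℂ) ≠ 0)]
  field_simp

theorem Z_xyk_eq_of_two_lt (s : ℂ) (hs : 0 < s.re) (k : ℝ) (hk : 2 < k) :
    Zcl s k = (k : ℂ) ^ s * F32 (-(s / 2)) (-(s / 2)) (1/2) 1 1 (4 / (k : ℂ) ^ 2) :=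
  Z_xyk_eq_of_two_lt_general s k hk
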